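/- Coordinate decomposition of axiomatic value operators: Let n, m be positive integers and let Φ : 𝒢ₙᵐ → (ℝᵐ)ⁿ be a value operator satisfying efficiency, symmetry, dummy, and additivity. Then there exist maps Ψ⁽ʲ⁾ : 𝒢ₙ → ℝⁿ, j = 1,…,m, such that for all v ∈ 𝒢ₙᵐ and all i ∈ {1,…,n}, Φᵢ(v) = (Ψᵢ⁽¹⁾(v⁽¹⁾), …, Ψᵢ⁽ᵐ⁾(v⁽ᵐ⁾)), where v⁽ʲ⁾ = πⱼ∘v is the j-th scalar coordinate game. Moreover, each Ψ⁽ʲ⁾ satisfies the scalar Shapley axioms of efficiency, symmetry, dummy, and additivity. -/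

import Mathlib

open Finset

/-- Efficiency axiom for a vector-valued value operator. -/
def IsEfficient (n m : ℕ) (Φ : (Finset (Fin n) → (Fin m → ℝ)) → (Fin n → Fin m → ℝ)) : Prop :=
  ∀ v : Finset (Fin n) → (Fin m → ℝ), v ∅ = 0 → ∑ i : Fin n, Φ v i = v Finset.univ

/-- Symmetry axiom. -/
def IsSymmetric (n m : ℕ) (Φ : (Finset (Fin n) → (Fin m → ℝ)) → (Fin n → Fin m → ℝ)) : Prop :=
  ∀ v : Finset (Fin n) → (Fin m → ℝ), v ∅ = 0 → ∀ i j : Fin n,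
    (∀ S : Finset (Fin n), i ∉ S → j ∉ S → v (insert i S) = v (insert j S)) →
    Φ v i = Φ v j

/-- Dummy (null player) axiom. -/
def IsDummy (n m : ℕ) (Φ : (Finset (Fin n) → (Fin m → ℝ)) → (Fin n → Fin m → ℝ)) : Prop :=
  ∀ v : Finset (Fin n) → (Fin m → ℝ), v ∅ = 0 → ∀ i : Fin n,
    (∀ S : Finset (Fin n), i ∉ S → v (insert i S) = v S) → Φ v i = 0

/-- Additivity axiom. -/
def IsAdditive (n m : ℕ) (Φ : (Finset (Fin n) → (Fin m → ℝ)) → (Fin n → Fin m → ℝ)) : Prop :=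
  ∀ v w : Finset (Fin n) → (Fin m → ℝ), v ∅ = 0 → w ∅ = 0 → ∀ α β : ℝ,
    Φ (α • v + β • w) = α • Φ v + β • Φ w

/-- Scalar efficiency axiom. -/
def IsEfficientR (n : ℕ) (Ψ : (Finset (Fin n) → ℝ) → (Fin n → ℝ)) : Prop :=
  ∀ v : Finset (Fin n) → ℝ, v ∅ = 0 → ∑ i : Fin n, Ψ v i = v Finset.univ

/-- Scalar symmetry axiom. -/
def IsSymmetricR (n : ℕ) (Ψ : (Finset (Fin n) → ℝ) → (Fin n → ℝ)) : Prop :=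
  ∀ v : Finset (Fin n) → ℝ, v ∅ = 0 → ∀ i j : Fin n,
    (∀ S : Finset (Fin n), i ∉ S → j ∉ S → v (insert i S) = v (insert j S)) →
    Ψ v i = Ψ v j

/-- Scalar dummy axiom. -/
def IsDummyR (n : ℕ) (Ψ : (Finset (Fin n) → ℝ) → (Fin n → ℝ)) : Prop :=
  ∀ v : Finset (Fin n) → ℝ, v ∅ = 0 → ∀ i : Fin n,
    (∀ S : Finset (Fin n), i ∉ S → v (insert i S) = v S) → Ψ v i = 0

/-- Scalar additivity axiom. -/
def IsAdditiveR (n : ℕ) (Ψ : (Finset (Fin n) → ℝ) → (Fin n → ℝ)) : Prop :=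
  ∀ v w : Finset (Fin n) → ℝ, v ∅ = 0 → w ∅ = 0 → ∀ α β : ℝ,
    Ψ (α • v + β • w) = α • Ψ v + β • Ψ w

/-!
Additivity makes `Φ` linear on games, and every game is a combination of unanimity games
`u_T c` (worth `c ∈ ℝᵐ` exactly for coalitions containing `T`) with the Harsanyi dividends as
coefficients. Dummy, symmetry and efficiency force `Φ(u_T c) = c / |T|` on `T` and `0` off it,
so `Φ` is the Shapley value, computed coordinatewise. The `j`-th coordinate of `Φ v` therefore
depends only on `v⁽ʲ⁾`, and `Ψ⁽ʲ⁾ w := (Φ (w · eⱼ))ⱼ` inherits the axioms from `Φ`.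
-/

section Harsanyi

variable {ι M : Type*}

def harsanyiDividend [AddCommGroup M] (v : Finset ι → M) (T : Finset ι) : M :=
  ∑ R ∈ T.powerset, (-1 : ℤ) ^ (#T + #R) • v R

def unanimityGame [DecidableEq ι] [Zero M] (T : Finset ι) (c : M) : Finset ι → M :=
  fun S => if T ⊆ S then c else 0

variable [AddCommGroup M]

theorem harsanyiDividend_empty (v : Finset ι → M) : harsanyiDividend v ∅ = v ∅ := by
  simp [harsanyiDividend]

theorem harsanyiDividend_apply {κ : Type*} (v : Finset ι → κ → M) (T : Finset ι) (j : κ) :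
    harsanyiDividend v T j = harsanyiDividend (fun S => v S j) T := by
  simp [harsanyiDividend, Finset.sum_apply]

variable [DecidableEq ι]

theorem harsanyiDividend_insert {a : ι} {T : Finset ι} (ha : a ∉ T) (v : Finset ι → M) :
    harsanyiDividend v (insert a T) = harsanyiDividend (fun R => v (insert a R) - v R) T := by
  rw [harsanyiDividend, harsanyiDividend, sum_powerset_insert ha, ← sum_add_distrib,
    card_insert_of_notMem ha]
  refine sum_congr rfl fun R hR => ?_
  have e₁ : (-1 : ℤ) ^ (#T + 1 + #R) = -(-1) ^ (#T + #R) := by ring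
  have e₂ : (-1 : ℤ) ^ (#T + 1 + (#R + 1)) = (-1) ^ (#T + #R) := by ring
  rw [card_insert_of_notMem fun h => ha (mem_powerset.mp hR h), e₁, e₂, neg_smul, smul_sub]
  abel

/-- Möbius inversion on the Boolean lattice. -/
theorem sum_powerset_harsanyiDividend (v : Finset ι → M) (S : Finset ι) :
    ∑ T ∈ S.powerset, harsanyiDividend v T = v S := by
  induction S using Finset.induction_on generalizing v with
  | empty => simp [harsanyiDividend_empty]
  | insert a S ha ih =>
    rw [sum_powerset_insert ha, ih,
      sum_congr rfl fun T hT => harsanyiDividend_insert (fun h => ha (mem_powerset.mp hT h)) v, ih]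
    abel

theorem sum_unanimityGame_harsanyiDividend [Fintype ι] (v : Finset ι → M) :
    ∑ T : Finset ι, unanimityGame T (harsanyiDividend v T) = v := by
  funext S
  simp only [Finset.sum_apply, unanimityGame]
  rw [← sum_powerset_harsanyiDividend v S, ← sum_filter]
  congr 1
  ext T
  simp

theorem unanimityGame_harsanyiDividend_empty {v : Finset ι → M} (hv : v ∅ = 0)
    (T : Finset ι) : unanimityGame T (harsanyiDividend v T) ∅ = 0 := by
  by_cases hT : T = ∅
  · simp [unanimityGame, hT, harsanyiDividend_empty, hv]
  · simp [unanimityGame, hT]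

end Harsanyi

noncomputable def shapleyValue {ι M : Type*} [DecidableEq ι] [Fintype ι] [AddCommGroup M]
    [Module ℝ M] (v : Finset ι → M) (i : ι) : M :=
  ∑ T : Finset ι, if i ∈ T then (#T : ℝ)⁻¹ • harsanyiDividend v T else 0

theorem shapleyValue_apply {ι κ : Type*} [DecidableEq ι] [Fintype ι]
    (v : Finset ι → κ → ℝ) (i : ι) (j : κ) :
    shapleyValue v i j = shapleyValue (fun S => v S j) i := by
  simp [shapleyValue, Finset.sum_apply, ite_apply, harsanyiDividend_apply]

section CoordinateGame

variable {ι κ : Type*} [DecidableEq κ]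

def coordinateGame (j : κ) (w : Finset ι → ℝ) : Finset ι → κ → ℝ :=
  fun S => Pi.single j (w S)

theorem coordinateGame_empty {w : Finset ι → ℝ} (hw : w ∅ = 0) (j : κ) :
    coordinateGame j w ∅ = 0 := by
  simp [coordinateGame, hw]

@[simp]
theorem coordinateGame_apply_self (j : κ) (w : Finset ι → ℝ) (S : Finset ι) :
    coordinateGame j w S j = w S := by
  simp [coordinateGame]

theorem coordinateGame_add_smul (j : κ) (v w : Finset ι → ℝ) (α β : ℝ) :
    coordinateGame j (α • v + β • w) = α • coordinateGame j v + β • coordinateGame j w := by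
  funext S k
  by_cases hk : k = j <;> simp [coordinateGame, hk]

end CoordinateGame

section Axioms

variable {n m : ℕ} {Φ : (Finset (Fin n) → (Fin m → ℝ)) → (Fin n → Fin m → ℝ)}

theorem IsAdditive.map_sum (hadd : IsAdditive n m Φ) {α : Type*} (s : Finset α)
    (f : α → Finset (Fin n) → Fin m → ℝ) (hf : ∀ a ∈ s, f a ∅ = 0) :
    Φ (∑ a ∈ s, f a) = ∑ a ∈ s, Φ (f a) := by
  induction s using Finset.cons_induction with
  | empty => simpa using hadd 0 0 rfl rfl 0 0
  | cons a s ha ih =>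
    have hs : (∑ b ∈ s, f b) ∅ = 0 := by
      rw [Finset.sum_apply]
      exact sum_eq_zero fun b hb => hf b (mem_cons_of_mem hb)
    rw [sum_cons, sum_cons, ← ih fun b hb => hf b (mem_cons_of_mem hb)]
    simpa using hadd _ _ (hf a (mem_cons_self a s)) hs 1 1

theorem IsDummy.apply_unanimityGame_of_notMem (hdum : IsDummy n m Φ) {T : Finset (Fin n)}
    {c : Fin m → ℝ} (hc : unanimityGame T c ∅ = 0) {i : Fin n} (hi : i ∉ T) :
    Φ (unanimityGame T c) i = 0 :=
  hdum _ hc i fun S _ => by simp only [unanimityGame, subset_insert_iff_of_notMem hi]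

theorem IsSymmetric.apply_unanimityGame_eq (hsym : IsSymmetric n m Φ) {T : Finset (Fin n)}
    {c : Fin m → ℝ} (hc : unanimityGame T c ∅ = 0) {i k : Fin n} (hi : i ∈ T) (hk : k ∈ T) :
    Φ (unanimityGame T c) i = Φ (unanimityGame T c) k := by
  obtain rfl | hik := eq_or_ne i k
  · rfl
  refine hsym _ hc i k fun S hiS hkS => ?_
  -- `T` contains both players, so it lies in neither `insert i S` nor `insert k S`.
  have hi' : ¬T ⊆ insert k S := fun h => by simpa [hik, hiS] using h hi
  have hk' : ¬T ⊆ insert i S := fun h => by simpa [hik.symm, hkS] using h hk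
  simp only [unanimityGame, if_neg hi', if_neg hk']

theorem apply_unanimityGame (heff : IsEfficient n m Φ) (hsym : IsSymmetric n m Φ)
    (hdum : IsDummy n m Φ) {T : Finset (Fin n)} {c : Fin m → ℝ}
    (hc : unanimityGame T c ∅ = 0) (i : Fin n) :
    Φ (unanimityGame T c) i = if i ∈ T then (#T : ℝ)⁻¹ • c else 0 := by
  split_ifs with hi
  · have hT : (#T : ℝ) ≠ 0 := by exact_mod_cast (card_pos.mpr ⟨i, hi⟩).ne'
    rw [eq_inv_smul_iff₀ hT, Nat.cast_smul_eq_nsmul, ← sum_const,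
      ← sum_congr rfl fun k hk => hsym.apply_unanimityGame_eq hc hk hi,
      sum_subset (subset_univ T) fun k _ hk => hdum.apply_unanimityGame_of_notMem hc hk,
      heff _ hc]
    simp [unanimityGame]
  · exact hdum.apply_unanimityGame_of_notMem hc hi

theorem eq_shapleyValue (heff : IsEfficient n m Φ) (hsym : IsSymmetric n m Φ)
    (hdum : IsDummy n m Φ) (hadd : IsAdditive n m Φ) {v : Finset (Fin n) → Fin m → ℝ}
    (hv : v ∅ = 0) : Φ v = shapleyValue v := by
  funext i
  conv_lhs => rw [← sum_unanimityGame_harsanyiDividend v]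
  rw [hadd.map_sum _ _ fun T _ => unanimityGame_harsanyiDividend_empty hv T, Finset.sum_apply]
  exact sum_congr rfl fun T _ =>
    apply_unanimityGame heff hsym hdum (unanimityGame_harsanyiDividend_empty hv T) i

def coordinateValue (Φ : (Finset (Fin n) → (Fin m → ℝ)) → (Fin n → Fin m → ℝ)) (j : Fin m)
    (w : Finset (Fin n) → ℝ) (i : Fin n) : ℝ :=
  Φ (coordinateGame j w) i j

theorem IsEfficient.coordinateValue (heff : IsEfficient n m Φ) (j : Fin m) :
    IsEfficientR n (coordinateValue Φ j) := fun w hw => by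
  simpa [_root_.coordinateValue, Finset.sum_apply] using
    congr_fun (heff _ (coordinateGame_empty hw j)) j

theorem IsSymmetric.coordinateValue (hsym : IsSymmetric n m Φ) (j : Fin m) :
    IsSymmetricR n (coordinateValue Φ j) := fun w hw i k hik =>
  congr_fun (hsym _ (coordinateGame_empty hw j) i k fun S hi hk => by
    simp only [coordinateGame, hik S hi hk]) j

theorem IsDummy.coordinateValue (hdum : IsDummy n m Φ) (j : Fin m) :
    IsDummyR n (coordinateValue Φ j) := fun w hw i hi =>
  congr_fun (hdum _ (coordinateGame_empty hw j) i fun S hS => by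
    simp only [coordinateGame, hi S hS]) j

theorem IsAdditive.coordinateValue (hadd : IsAdditive n m Φ) (j : Fin m) :
    IsAdditiveR n (coordinateValue Φ j) := fun v w hv hw α β => by
  funext i
  have h := congr_fun (congr_fun
    (hadd _ _ (coordinateGame_empty hv j) (coordinateGame_empty hw j) α β) i) j
  simpa [_root_.coordinateValue, coordinateGame_add_smul] using h

theorem apply_eq_coordinateValue (heff : IsEfficient n m Φ) (hsym : IsSymmetric n m Φ)
    (hdum : IsDummy n m Φ) (hadd : IsAdditive n m Φ) {v : Finset (Fin n) → Fin m → ℝ}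
    (hv : v ∅ = 0) (i : Fin n) (j : Fin m) :
    Φ v i j = coordinateValue Φ j (fun S => v S j) i := by
  rw [_root_.coordinateValue, eq_shapleyValue heff hsym hdum hadd hv,
    eq_shapleyValue heff hsym hdum hadd (coordinateGame_empty (congr_fun hv j) j),
    shapleyValue_apply, shapleyValue_apply]
  simp

end Axioms

theorem coordinate_decomposition_general (n m : ℕ)
    (Φ : (Finset (Fin n) → (Fin m → ℝ)) → (Fin n → Fin m → ℝ))
    (heff : IsEfficient n m Φ) (hsym : IsSymmetric n m Φ)
    (hdum : IsDummy n m Φ) (hadd : IsAdditive n m Φ) :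
    ∃ Ψ : Fin m → ((Finset (Fin n) → ℝ) → (Fin n → ℝ)),
      (∀ v : Finset (Fin n) → (Fin m → ℝ), v ∅ = 0 →
        ∀ i : Fin n, ∀ j : Fin m, Φ v i j = Ψ j (fun S => v S j) i) ∧
      (∀ j : Fin m, IsEfficientR n (Ψ j) ∧ IsSymmetricR n (Ψ j) ∧
        IsDummyR n (Ψ j) ∧ IsAdditiveR n (Ψ j)) :=
  ⟨coordinateValue Φ, fun _ hv => apply_eq_coordinateValue heff hsym hdum hadd hv,
    fun j => ⟨heff.coordinateValue j, hsym.coordinateValue j, hdum.coordinateValue j,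
      hadd.coordinateValue j⟩⟩

/-- **Coordinate decomposition of axiomatic value operators.**  If `Φ` satisfies the
four Shapley axioms on `𝒢ₙᵐ`, then there exist scalar operators `Ψ⁽ʲ⁾ : 𝒢ₙ → ℝⁿ`
with `Φᵢ(v) = (Ψᵢ⁽¹⁾(v⁽¹⁾),…,Ψᵢ⁽ᵐ⁾(v⁽ᵐ⁾))`, each of which satisfies the scalar
Shapley axioms. -/
theorem coordinate_decomposition (n m : ℕ) (hn : 0 < n) (hm : 0 < m)
    (Φ : (Finset (Fin n) → (Fin m → ℝ)) → (Fin n → Fin m → ℝ))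
    (heff : IsEfficient n m Φ) (hsym : IsSymmetric n m Φ)
    (hdum : IsDummy n m Φ) (hadd : IsAdditive n m Φ) :
    ∃ Ψ : Fin m → ((Finset (Fin n) → ℝ) → (Fin n → ℝ)),
      (∀ v : Finset (Fin n) → (Fin m → ℝ), v ∅ = 0 →
        ∀ i : Fin n, ∀ j : Fin m, Φ v i j = Ψ j (fun S => v S j) i) ∧
      (∀ j : Fin m, IsEfficientR n (Ψ j) ∧ IsSymmetricR n (Ψ j) ∧
        IsDummyR n (Ψ j) ∧ IsAdditiveR n (Ψ j)) :=
  coordinate_decomposition_general n m Φ heff hsym hdum hadd
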